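/- For a vertically mapped wedge with J > 0, the products t_x·J and t_y·J are polynomials of degree at most 1 in the extruded coordinate t (they are affine in t and independent of degree in r,s beyond affine dependence permitted by the vertex mapping). -/
import Mathlib


noncomputable section

/-- Vertex basis functions of the reference wedge. -/
def wv : Fin 6 → ℝ → ℝ → ℝ → ℝ
  | 0 => fun r s t => (1 - r - s) * (1 - t)
  | 1 => fun r s t => r * (1 - t)
  | 2 => fun r s t => s * (1 - t)
  | 3 => fun r s t => (1 - r - s) * t
  | 4 => fun r s t => r * t
  | 5 => fun r s t => s * t

/-- The `i`-th coordinate of the trilinear vertex mapping `Φ` with vertices `ν`. -/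
def wedgeMap (ν : Fin 6 → Fin 3 → ℝ) (i : Fin 3) (r s t : ℝ) : ℝ :=
  ∑ k : Fin 6, ν k i * wv k r s t

/-- A wedge is vertically mapped if the x and y coordinates agree within each
vertex pair (ν₁,ν₄), (ν₂,ν₅), (ν₃,ν₆). -/
def VerticallyMapped (ν : Fin 6 → Fin 3 → ℝ) : Prop :=
  (ν 0 0 = ν 3 0 ∧ ν 0 1 = ν 3 1) ∧
  (ν 1 0 = ν 4 0 ∧ ν 1 1 = ν 4 1) ∧
  (ν 2 0 = ν 5 0 ∧ ν 2 1 = ν 5 1)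

/-- partial derivative in the first (r) variable -/
def pdr (f : ℝ → ℝ → ℝ → ℝ) (r s t : ℝ) : ℝ := deriv (fun x => f x s t) r
/-- partial derivative in the second (s) variable -/
def pds (f : ℝ → ℝ → ℝ → ℝ) (r s t : ℝ) : ℝ := deriv (fun x => f r x t) s
/-- partial derivative in the third (t) variable -/
def pdt (f : ℝ → ℝ → ℝ → ℝ) (r s t : ℝ) : ℝ := deriv (fun x => f r s x) t

/-- Jacobian determinant of the wedge mapping. -/
def wedgeJac (ν : Fin 6 → Fin 3 → ℝ) (r s t : ℝ) : ℝ :=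
  Matrix.det !![pdr (wedgeMap ν 0) r s t, pds (wedgeMap ν 0) r s t, pdt (wedgeMap ν 0) r s t;
                pdr (wedgeMap ν 1) r s t, pds (wedgeMap ν 1) r s t, pdt (wedgeMap ν 1) r s t;
                pdr (wedgeMap ν 2) r s t, pds (wedgeMap ν 2) r s t, pdt (wedgeMap ν 2) r s t]

def X (ν : Fin 6 → Fin 3 → ℝ) : ℝ → ℝ → ℝ → ℝ := wedgeMap ν 0
def Y (ν : Fin 6 → Fin 3 → ℝ) : ℝ → ℝ → ℝ → ℝ := wedgeMap ν 1
def Z (ν : Fin 6 → Fin 3 → ℝ) : ℝ → ℝ → ℝ → ℝ := wedgeMap ν 2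

/-- t_x · J = y_r z_s − z_r y_s. -/
def gTxJ (ν : Fin 6 → Fin 3 → ℝ) (r s t : ℝ) : ℝ :=
  pdr (Y ν) r s t * pds (Z ν) r s t - pdr (Z ν) r s t * pds (Y ν) r s t
/-- t_y · J = −(x_r z_s − z_r x_s). -/
def gTyJ (ν : Fin 6 → Fin 3 → ℝ) (r s t : ℝ) : ℝ :=
  -(pdr (X ν) r s t * pds (Z ν) r s t - pdr (Z ν) r s t * pds (X ν) r s t)

lemma pdr_wedgeMap (ν : Fin 6 → Fin 3 → ℝ) (i : Fin 3) (r s t : ℝ) :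
    pdr (wedgeMap ν i) r s t = (ν 1 i - ν 0 i) * (1 - t) + (ν 4 i - ν 3 i) * t := by
  have h : (fun x => wedgeMap ν i x s t) =
      fun x => (ν 0 i * (1 - s) * (1 - t) + ν 2 i * s * (1 - t) + ν 3 i * (1 - s) * t
        + ν 5 i * s * t) + ((ν 1 i - ν 0 i) * (1 - t) + (ν 4 i - ν 3 i) * t) * x := by
    funext x
    simp [wedgeMap, wv, Fin.sum_univ_six]
    ring
  rw [pdr, h]
  simpa using (((hasDerivAt_id r).const_mul ((ν 1 i - ν 0 i) * (1 - t) + (ν 4 i - ν 3 i) * t)).const_add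
    (ν 0 i * (1 - s) * (1 - t) + ν 2 i * s * (1 - t) + ν 3 i * (1 - s) * t + ν 5 i * s * t)).deriv

lemma pds_wedgeMap (ν : Fin 6 → Fin 3 → ℝ) (i : Fin 3) (r s t : ℝ) :
    pds (wedgeMap ν i) r s t = (ν 2 i - ν 0 i) * (1 - t) + (ν 5 i - ν 3 i) * t := by
  have h : (fun x => wedgeMap ν i r x t) =
      fun x => (ν 0 i * (1 - r) * (1 - t) + ν 1 i * r * (1 - t) + ν 3 i * (1 - r) * t
        + ν 4 i * r * t) + ((ν 2 i - ν 0 i) * (1 - t) + (ν 5 i - ν 3 i) * t) * x := by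
    funext x
    simp [wedgeMap, wv, Fin.sum_univ_six]
    ring
  rw [pds, h]
  simpa using (((hasDerivAt_id s).const_mul ((ν 2 i - ν 0 i) * (1 - t) + (ν 5 i - ν 3 i) * t)).const_add
    (ν 0 i * (1 - r) * (1 - t) + ν 1 i * r * (1 - t) + ν 3 i * (1 - r) * t + ν 4 i * r * t)).deriv

/-- For a vertically mapped wedge with J > 0, the products t_x·J and t_y·J
are polynomials of degree at most one in the extruded coordinate t (affine in t,
with coefficients independent of r and s). -/
theorem stmt5 (ν : Fin 6 → Fin 3 → ℝ) (hν : VerticallyMapped ν)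
    (hJ : ∀ r s t : ℝ, 0 < wedgeJac ν r s t) :
    (∃ a b : ℝ, ∀ r s t : ℝ, gTxJ ν r s t = a + b * t) ∧
    (∃ a b : ℝ, ∀ r s t : ℝ, gTyJ ν r s t = a + b * t) := by
  obtain ⟨⟨h1, h2⟩, ⟨h3, h4⟩, ⟨h5, h6⟩⟩ := hν
  constructor
  · refine ⟨(ν 1 1 - ν 0 1) * (ν 2 2 - ν 0 2) - (ν 1 2 - ν 0 2) * (ν 2 1 - ν 0 1),
      (ν 1 1 - ν 0 1) * ((ν 5 2 - ν 3 2) - (ν 2 2 - ν 0 2))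
        - ((ν 4 2 - ν 3 2) - (ν 1 2 - ν 0 2)) * (ν 2 1 - ν 0 1), fun r s t => ?_⟩
    simp only [gTxJ, Y, Z, pdr_wedgeMap, pds_wedgeMap, h2, h4, h6]
    ring
  · refine ⟨-((ν 1 0 - ν 0 0) * (ν 2 2 - ν 0 2) - (ν 1 2 - ν 0 2) * (ν 2 0 - ν 0 0)),
      -((ν 1 0 - ν 0 0) * ((ν 5 2 - ν 3 2) - (ν 2 2 - ν 0 2))
        - ((ν 4 2 - ν 3 2) - (ν 1 2 - ν 0 2)) * (ν 2 0 - ν 0 0)), fun r s t => ?_⟩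
    simp only [gTyJ, X, Z, pdr_wedgeMap, pds_wedgeMap, h1, h3, h5]
    ring
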